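/- Let p ∈ [0,1]. Define the stage-1 class weights q_I = (1−p)² + p²/9, q_X = q_Y = 2p²/9, q_Z = 2p(1−p)/3, the stage-2 syndrome-zero set S₀' = {II, IX, XI, XX, ZZ, ZY, YZ, YY}, and the stage-2 success set G' = {II, XX}. Assign to a pair (Q, P) of Pauli labels the weight q_Q·w(P), where w is the depolarizing weight. Then the total weight of S₀' equals 1 − 8p/3 + 28p²/9 − 32p³/27, the total weight of G' equals 1 − 3p + 28p²/9 − 28p³/27, the denominator 1 − 8p/3 + 28p²/9 − 32p³/27 is positive on [0,1], the yield of the single-qubit error-detection scheme using two noisy EPR pairs is Y = (1/3)(1 − 8p/3 + 28p²/9 − 32p³/27), and its success probability is p_s = (1 − 3p + 28p²/9 − 28p³/27)/(1 − 8p/3 + 28p²/9 − 32p³/27). -/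

import Mathlib

/-!
The denominator factors as `(1 - 2p/3) * ((1 - p)^2 + 7p^2/9)`; the quadratic factor has
negative discriminant, so the denominator is positive for every `p < 3/2`, in particular on `[0, 1]`.
-/

/-- Pauli labels `{I, X, Y, Z}`. -/
inductive Pauli | I | X | Y | Z
deriving DecidableEq, Repr

/-- The depolarizing weight of a Pauli label: `1 - p` for `I` and `p/3` for `X`, `Y`, `Z`. -/
noncomputable def w (p : ℝ) : Pauli → ℝ
  | .I => 1 - p
  | _ => p / 3

/-- Stage-1 class weights of the net error after conditioning on the first syndrome being
zero: `q_I = (1−p)² + p²/9`, `q_X = q_Y = 2p²/9`, `q_Z = 2p(1−p)/3`. -/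
noncomputable def q (p : ℝ) : Pauli → ℝ
  | .I => (1 - p)^2 + p^2/9
  | .X => 2*p^2/9
  | .Y => 2*p^2/9
  | .Z => 2*p*(1 - p)/3

/-- Stage-2 syndrome-zero set `S₀' = {II, IX, XI, XX, ZZ, ZY, YZ, YY}`:
pairs `(Q, P)` of the net error `Q` and the second EPR pair's error `P`. -/
def S0' : Finset (Pauli × Pauli) :=
  {(.I, .I), (.I, .X), (.X, .I), (.X, .X), (.Z, .Z), (.Z, .Y), (.Y, .Z), (.Y, .Y)}

/-- Stage-2 success set `G' = {II, XX}`. -/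
def G' : Finset (Pauli × Pauli) := {(.I, .I), (.X, .X)}

theorem sum_S0'_eq (p : ℝ) :
    ∑ e ∈ S0', q p e.1 * w p e.2 = 1 - 8*p/3 + 28*p^2/9 - 32*p^3/27 := by
  simp (disch := decide) only [S0', Finset.sum_insert, Finset.sum_singleton, q, w]
  ring

theorem sum_G'_eq (p : ℝ) :
    ∑ e ∈ G', q p e.1 * w p e.2 = 1 - 3*p + 28*p^2/9 - 28*p^3/27 := by
  simp (disch := decide) only [G', Finset.sum_insert, Finset.sum_singleton, q, w]
  ring

theorem syndromeZero_poly_eq_mul (p : ℝ) :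
    1 - 8*p/3 + 28*p^2/9 - 32*p^3/27 = (1 - 2*p/3) * ((1 - p)^2 + 7*p^2/9) := by
  ring

theorem syndromeZero_poly_pos {p : ℝ} (hp : p < 3/2) :
    0 < 1 - 8*p/3 + 28*p^2/9 - 32*p^3/27 := by
  rw [syndromeZero_poly_eq_mul]
  have hquad : 0 < (1 - p)^2 + 7*p^2/9 := by nlinarith [sq_nonneg (4*p/3 - 3/4)]
  exact mul_pos (by linarith) hquad

theorem stmt4 (p : ℝ) (hp : p ∈ Set.Icc (0 : ℝ) 1) :
    (∑ e ∈ S0', q p e.1 * w p e.2) = 1 - 8*p/3 + 28*p^2/9 - 32*p^3/27 ∧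
    (∑ e ∈ G', q p e.1 * w p e.2) = 1 - 3*p + 28*p^2/9 - 28*p^3/27 ∧
    0 < 1 - 8*p/3 + 28*p^2/9 - 32*p^3/27 ∧
    (1/3 : ℝ) * (∑ e ∈ S0', q p e.1 * w p e.2)
      = (1/3) * (1 - 8*p/3 + 28*p^2/9 - 32*p^3/27) ∧
    (∑ e ∈ G', q p e.1 * w p e.2) / (∑ e ∈ S0', q p e.1 * w p e.2)
      = (1 - 3*p + 28*p^2/9 - 28*p^3/27) / (1 - 8*p/3 + 28*p^2/9 - 32*p^3/27) := by
  have hS := sum_S0'_eq p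
  refine ⟨hS, sum_G'_eq p, syndromeZero_poly_pos (by linarith [hp.2]), by rw [hS], ?_⟩
  rw [hS, sum_G'_eq]
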